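/- Let D be a design of strength R−1 (R ≥ 2) with n ≥ R factors, each factor given a normalized orthogonal coding. Let U be an R-element set of factors, s_min = min_{i∈U} s i, and c ∈ U with s c > s_min. Then factor c is not completely confounded by the factors in U ∖ {c}. -/

import Mathlib

open Finset Matrix

/-- A design `D` (rows = runs, coordinates = factors) has strength `t` if in every
projection onto `t` factors every level combination occurs equally often. -/
def hasStrength {N n : ℕ} (s : Fin n → ℕ) (D : Fin N → ∀ i, Fin (s i)) (t : ℕ) : Prop :=
  ∀ T : Finset (Fin n), T.card = t → ∀ x : ∀ i, Fin (s i),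
    (Finset.univ.filter fun r => ∀ i ∈ T, D r i = x i).card = N / ∏ i ∈ T, s i

/-- Normalized orthogonal coding: contrast columns have zero sum and
`Cᵀ C = m • 1` (squared length `m`, pairwise orthogonal). -/
def isNOC {m : ℕ} (C : Fin m → Fin (m - 1) → ℝ) : Prop :=
  (∀ j, ∑ l, C l j = 0) ∧
    ∀ j j', ∑ l, C l j * C l j' = if j = j' then (m : ℝ) else 0

/-- Column (indexed by the tuple `j`) of the interaction model matrix of the set `U`
of factors, evaluated at run `r`. -/
def intCol {N n : ℕ} {s : Fin n → ℕ} (C : ∀ i, Fin (s i) → Fin (s i - 1) → ℝ)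
    (D : Fin N → ∀ i, Fin (s i)) (U : Finset (Fin n))
    (j : ∀ i : U, Fin (s i.1 - 1)) (r : Fin N) : ℝ :=
  ∏ i : U, C i.1 (D r i.1) (j i)

/-- Projection frequency `a_k(U)`: sum of squared column sums of the interaction
model matrix of `U`, divided by `N²`. -/
noncomputable def projFreq {N n : ℕ} {s : Fin n → ℕ}
    (C : ∀ i, Fin (s i) → Fin (s i - 1) → ℝ)
    (D : Fin N → ∀ i, Fin (s i)) (U : Finset (Fin n)) : ℝ :=
  (∑ j : ∀ i : U, Fin (s i.1 - 1), (∑ r, intCol C D U j r) ^ 2) / (N : ℝ) ^ 2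

/-- The set of columns of the full model matrix `F_C` of a set `Cset` of factors:
the all-ones column together with all columns of the interaction model matrices
of all nonempty subsets of `Cset`. -/
def fullCols {N n : ℕ} {s : Fin n → ℕ} (C : ∀ i, Fin (s i) → Fin (s i - 1) → ℝ)
    (D : Fin N → ∀ i, Fin (s i)) (Cset : Finset (Fin n)) : Set (Fin N → ℝ) :=
  {(fun _ => 1 : Fin N → ℝ)} ∪
    {v | ∃ S : Finset (Fin n), S ⊆ Cset ∧ S.Nonempty ∧
      ∃ j : ∀ i : S, Fin (s i.1 - 1), v = fun r => intCol C D S j r}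

/-- Factor `c` is completely confounded by the factors in `Cset` if every column of
its main-effects model matrix lies in the span of the columns of `F_Cset`. -/
def confounded {N n : ℕ} {s : Fin n → ℕ} (C : ∀ i, Fin (s i) → Fin (s i - 1) → ℝ)
    (D : Fin N → ∀ i, Fin (s i)) (c : Fin n) (Cset : Finset (Fin n)) : Prop :=
  ∀ j : Fin (s c - 1), (fun r => C c (D r c) j) ∈ Submodule.span ℝ (fullCols C D Cset)

/-! Let `E = U ∖ {c}`. Strength `|E|` makes the columns of the full model matrix `F_E`
orthogonal with squared length `N`, and makes every main-effect column `x` of `c` orthogonal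
to all of them except the columns of `X_E`. So if `c` is confounded by `E`, then `x` lies in the
span of the columns of `X_E` and Parseval gives `∑_J (xᵀ X_{E,J})² = N²`; summing over the
`s c - 1` columns `x`, the projection frequency `a_R(U)` equals `s c - 1`. Running the same
computation from any other `k ∈ U`, with Bessel's inequality in place of Parseval, gives
`a_R(U) ≤ s k - 1`, which is impossible when `s k < s c`. -/

section DotProduct

variable {m : Type*} [Fintype m]

theorem dotProduct_eq_zero_of_mem_span {A : Set (m → ℝ)} {v w : m → ℝ}
    (hv : ∀ a ∈ A, v ⬝ᵥ a = 0) (hw : w ∈ Submodule.span ℝ A) : v ⬝ᵥ w = 0 := by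
  induction hw using Submodule.span_induction with
  | mem a ha => exact hv a ha
  | zero => exact dotProduct_zero v
  | add a b _ _ ha hb => rw [dotProduct_add, ha, hb, add_zero]
  | smul c a _ ha => rw [dotProduct_smul, ha, smul_zero]

theorem mem_span_of_mem_span_union_of_dotProduct_eq_zero {A B : Set (m → ℝ)} {v : m → ℝ}
    (hv : v ∈ Submodule.span ℝ (A ∪ B)) (hvA : ∀ a ∈ A, v ⬝ᵥ a = 0)
    (hBA : ∀ b ∈ B, ∀ a ∈ A, b ⬝ᵥ a = 0) : v ∈ Submodule.span ℝ B := by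
  rw [Submodule.span_union, Submodule.mem_sup] at hv
  obtain ⟨a, ha, b, hb, rfl⟩ := hv
  have hbA : b ⬝ᵥ a = 0 := by
    refine dotProduct_eq_zero_of_mem_span (fun a' ha' => ?_) ha
    rw [dotProduct_comm]
    exact dotProduct_eq_zero_of_mem_span
      (fun b' hb' => by rw [dotProduct_comm]; exact hBA b' hb' a' ha') hb
  have haa : a ⬝ᵥ a = 0 := by
    have := dotProduct_eq_zero_of_mem_span hvA ha
    rwa [add_dotProduct, hbA, add_zero] at this
  rw [dotProduct_self_eq_zero.mp haa, zero_add]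
  exact hb

variable {ι : Type*} [Fintype ι] {x : ι → m → ℝ} {N : ℝ}

theorem dotProduct_sum_smul_eq_sum_mul (v : m → ℝ) (c : ι → ℝ) :
    v ⬝ᵥ ∑ a, c a • x a = ∑ a, c a * (v ⬝ᵥ x a) := by
  simp [dotProduct_sum, dotProduct_smul]

variable [DecidableEq ι]

theorem sum_smul_dotProduct_of_orthogonal
    (hx : ∀ a b, x a ⬝ᵥ x b = if a = b then N else 0) (c : ι → ℝ) (b : ι) :
    (∑ a, c a • x a) ⬝ᵥ x b = c b * N := by
  simp [sum_dotProduct, smul_dotProduct, hx]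

theorem sum_sq_dotProduct_le_of_orthogonal
    (hx : ∀ a b, x a ⬝ᵥ x b = if a = b then N else 0) (hN : 0 < N) (v : m → ℝ) :
    ∑ a, (v ⬝ᵥ x a) ^ 2 ≤ N * (v ⬝ᵥ v) := by
  set y := ∑ a, (v ⬝ᵥ x a) • x a
  have hyx : ∀ a, y ⬝ᵥ x a = (v ⬝ᵥ x a) * N := sum_smul_dotProduct_of_orthogonal hx _
  have hvy : v ⬝ᵥ y = ∑ a, (v ⬝ᵥ x a) ^ 2 := by
    simp only [y, dotProduct_sum_smul_eq_sum_mul, sq]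
  have hyy : y ⬝ᵥ y = N * ∑ a, (v ⬝ᵥ x a) ^ 2 := by
    rw [show y ⬝ᵥ y = ∑ a, (v ⬝ᵥ x a) * (y ⬝ᵥ x a) from dotProduct_sum_smul_eq_sum_mul y _,
      mul_sum]
    exact sum_congr rfl fun a _ => by rw [hyx]; ring
  have h := dotProduct_star_self_nonneg (N • v - y)
  simp only [star_trivial, sub_dotProduct, dotProduct_sub, smul_dotProduct, dotProduct_smul,
    dotProduct_comm y v, hvy, hyy, smul_eq_mul] at h
  nlinarith

theorem sum_sq_dotProduct_eq_of_orthogonal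
    (hx : ∀ a b, x a ⬝ᵥ x b = if a = b then N else 0) {v : m → ℝ}
    (hv : v ∈ Submodule.span ℝ (Set.range x)) :
    ∑ a, (v ⬝ᵥ x a) ^ 2 = N * (v ⬝ᵥ v) := by
  obtain ⟨c, rfl⟩ := (Submodule.mem_span_range_iff_exists_fun ℝ).mp hv
  simp only [sum_smul_dotProduct_of_orthogonal hx, dotProduct_sum_smul_eq_sum_mul, mul_sum]
  exact sum_congr rfl fun a _ => by ring

end DotProduct

namespace hasStrength

variable {N n t : ℕ} {s : Fin n → ℕ} {D : Fin N → ∀ i, Fin (s i)}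

theorem sum_prod_eq_of_card_eq (hD : hasStrength s D t) (hs : ∀ i, 0 < s i)
    {T : Finset (Fin n)} (hT : T.card = t) (g : ∀ i, Fin (s i) → ℝ) :
    ∑ r, ∏ i ∈ T, g i (D r i) = ((N / ∏ i ∈ T, s i : ℕ) : ℝ) * ∏ i ∈ T, ∑ l, g i l := by
  classical
  let φ : Fin N → ∀ i : T, Fin (s i) := fun r i => D r i
  have hfiber : ∀ y, #{r | φ r = y} = N / ∏ i ∈ T, s i := by
    intro y
    let x : ∀ i, Fin (s i) := fun i => if h : i ∈ T then y ⟨i, h⟩ else ⟨0, hs i⟩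
    rw [← hD T hT x]
    congr 1
    ext r
    simp only [mem_filter, mem_univ, true_and, φ, x, funext_iff]
    exact ⟨fun h i hi => by simp [hi, h ⟨i, hi⟩], fun h i => by simpa using h i i.2⟩
  calc ∑ r, ∏ i ∈ T, g i (D r i)
      = ∑ y, ∑ r with φ r = y, ∏ i : T, g i (φ r i) := by
        rw [sum_fiberwise]
        exact sum_congr rfl fun r _ => (prod_coe_sort T fun i => g i (D r i)).symm
    _ = ∑ y : ∀ i : T, Fin (s i), ((N / ∏ i ∈ T, s i : ℕ) : ℝ) * ∏ i : T, g i (y i) := by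
        refine sum_congr rfl fun y _ => ?_
        rw [sum_congr rfl fun r hr => by rw [(mem_filter.mp hr).2], sum_const, hfiber,
          nsmul_eq_mul]
    _ = _ := by
        rw [← mul_sum, ← Fintype.prod_sum fun (i : T) l => g i l,
          prod_coe_sort T fun i => ∑ l, g i l]

theorem sum_prod_eq (hD : hasStrength s D t) (hs : ∀ i, 0 < s i) (ht : t ≤ n)
    {T : Finset (Fin n)} (hT : T.card ≤ t) (g : ∀ i, Fin (s i) → ℝ) :
    ∑ r, ∏ i ∈ T, g i (D r i) = N / (∏ i ∈ T, (s i : ℝ)) * ∏ i ∈ T, ∑ l, g i l := by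
  classical
  obtain ⟨T', hTT', -, hT'⟩ := exists_subsuperset_card_eq (subset_univ T) hT (by simpa using ht)
  -- `g = 1` shows that the truncating division `N / ∏ s i` in `ℕ` is exact.
  have hN : ((N / ∏ i ∈ T', s i : ℕ) : ℝ) * ∏ i ∈ T', (s i : ℝ) = N := by
    simpa using (sum_prod_eq_of_card_eq hD hs hT' fun _ _ => (1 : ℝ)).symm
  have hsum := sum_prod_eq_of_card_eq hD hs hT' fun i l => if i ∈ T then g i l else 1
  have hL : ∀ r, ∏ i ∈ T', (if i ∈ T then g i (D r i) else 1) = ∏ i ∈ T, g i (D r i) := by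
    intro r
    rw [prod_ite_mem, inter_eq_right.mpr hTT']
  have hR : ∏ i ∈ T', ∑ l, (if i ∈ T then g i l else 1)
      = (∏ i ∈ T' \ T, (s i : ℝ)) * ∏ i ∈ T, ∑ l, g i l := by
    rw [← prod_sdiff hTT']
    congr 1
    · exact prod_congr rfl fun i hi => by simp [(mem_sdiff.mp hi).2]
    · exact prod_congr rfl fun i hi => by simp [hi]
  rw [sum_congr rfl fun r _ => hL r, hR] at hsum
  rw [← prod_sdiff hTT' (f := fun i => (s i : ℝ))] at hN
  have hpos : ∀ T : Finset (Fin n), 0 < ∏ i ∈ T, (s i : ℝ) :=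
    fun T => prod_pos fun i _ => Nat.cast_pos.mpr (hs i)
  rw [hsum, ← hN]
  field_simp [(hpos T).ne', (hpos (T' \ T)).ne']

end hasStrength

section Columns

variable {N n : ℕ} {s : Fin n → ℕ} (C : ∀ i, Fin (s i) → Fin (s i - 1) → ℝ)

def mainCol (D : Fin N → ∀ i, Fin (s i)) (c : Fin n) (a : Fin (s c - 1)) : Fin N → ℝ :=
  fun r => C c (D r c) a

variable {C}

theorem intCol_singleton (D : Fin N → ∀ i, Fin (s i)) (c : Fin n) (a : Fin (s c - 1)) :
    intCol C D {c} (fun i => Fin.cast (congrArg (s · - 1) (mem_singleton.mp i.2).symm) a)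
      = mainCol C D c a := by
  funext r
  rw [intCol, Fintype.prod_eq_single ⟨c, mem_singleton_self c⟩
    fun i hi => absurd (Subtype.ext (mem_singleton.mp i.2)) hi]
  rfl

theorem intCol_empty (D : Fin N → ∀ i, Fin (s i))
    (j : ∀ i : (∅ : Finset (Fin n)), Fin (s i.1 - 1)) :
    intCol C D ∅ j = fun _ => 1 := by
  funext r
  simp [intCol]

theorem fullCols_subset (D : Fin N → ∀ i, Fin (s i)) (E : Finset (Fin n)) :
    fullCols C D E ⊆ {v | ∃ S ⊂ E, ∃ j, v = intCol C D S j} ∪ Set.range (intCol C D E) := by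
  suffices h : ∀ S ⊆ E, ∀ j, intCol C D S j ∈
      {v | ∃ S ⊂ E, ∃ j, v = intCol C D S j} ∪ Set.range (intCol C D E) by
    rintro v (rfl | ⟨S, hSE, -, j, rfl⟩)
    · rw [← intCol_empty D fun i => absurd i.2 (notMem_empty _)]
      exact h ∅ (empty_subset E) _
    · exact h S hSE j
  intro S hSE j
  rcases hSE.eq_or_ssubset with rfl | hSE
  · exact Or.inr ⟨j, rfl⟩
  · exact Or.inl ⟨S, hSE, j, rfl⟩

theorem sum_intCol_mul_intCol (D : Fin N → ∀ i, Fin (s i)) (S : Finset (Fin n)) (r r' : Fin N) :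
    ∑ J, intCol C D S J r * intCol C D S J r' = ∏ i ∈ S, ∑ j, C i (D r i) j * C i (D r' i) j := by
  classical
  simp only [intCol, ← prod_mul_distrib]
  rw [← Fintype.prod_sum fun (i : S) j => C i (D r i) j * C i (D r' i) j,
    prod_coe_sort S fun i => ∑ j, C i (D r i) j * C i (D r' i) j]

theorem sum_sq_sum_intCol (D : Fin N → ∀ i, Fin (s i)) (U : Finset (Fin n)) :
    ∑ K, (∑ r, intCol C D U K r) ^ 2
      = ∑ r, ∑ r', ∏ i ∈ U, ∑ j, C i (D r i) j * C i (D r' i) j := by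
  simp only [sq, sum_mul_sum, ← sum_intCol_mul_intCol]
  rw [sum_comm]
  exact sum_congr rfl fun r _ => sum_comm

theorem sum_sq_dotProduct_intCol_erase (D : Fin N → ∀ i, Fin (s i)) {U : Finset (Fin n)} {c : Fin n}
    (hc : c ∈ U) :
    ∑ a, ∑ J, (mainCol C D c a ⬝ᵥ intCol C D (U.erase c) J) ^ 2
      = ∑ K, (∑ r, intCol C D U K r) ^ 2 := by
  calc ∑ a, ∑ J, (mainCol C D c a ⬝ᵥ intCol C D (U.erase c) J) ^ 2
      = ∑ r, ∑ r', ∑ a, ∑ J, (C c (D r c) a * C c (D r' c) a)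
          * (intCol C D (U.erase c) J r * intCol C D (U.erase c) J r') := by
        simp only [mainCol, dotProduct, sq, sum_mul_sum]
        conv_lhs => enter [2, a]; rw [sum_comm]; enter [2, r]; rw [sum_comm]
        rw [sum_comm]
        refine sum_congr rfl fun r _ => ?_
        rw [sum_comm]
        exact sum_congr rfl fun r' _ => sum_congr rfl fun a _ => sum_congr rfl fun J _ => by ring
    _ = ∑ r, ∑ r', ∏ i ∈ U, ∑ j, C i (D r i) j * C i (D r' i) j := by
        refine sum_congr rfl fun r _ => sum_congr rfl fun r' _ => ?_
        rw [← mul_prod_erase U _ hc, ← sum_intCol_mul_intCol, sum_mul_sum]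
    _ = _ := (sum_sq_sum_intCol D U).symm

end Columns

section Orthogonality

variable {N n : ℕ} {s : Fin n → ℕ} (C : ∀ i, Fin (s i) → Fin (s i - 1) → ℝ)

def intColFactor (S : Finset (Fin n)) (j : ∀ i : S, Fin (s i.1 - 1)) (i : Fin n) (l : Fin (s i)) :
    ℝ :=
  if h : i ∈ S then C i l (j ⟨i, h⟩) else 1

variable {C}

theorem intCol_eq_prod_intColFactor (D : Fin N → ∀ i, Fin (s i)) {S T : Finset (Fin n)}
    (hST : S ⊆ T) (j : ∀ i : S, Fin (s i.1 - 1)) (r : Fin N) :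
    intCol C D S j r = ∏ i ∈ T, intColFactor C S j i (D r i) := by
  rw [← prod_subset hST (f := fun i => intColFactor C S j i (D r i)) fun i _ hi => dif_neg hi,
    ← prod_coe_sort S]
  exact prod_congr rfl fun i _ => by simp [intColFactor]

theorem sum_intColFactor_mul_intColFactor_of_mem_of_notMem (hC : ∀ i, isNOC (C i))
    {S S' : Finset (Fin n)} (j : ∀ i : S, Fin (s i.1 - 1)) (j' : ∀ i : S', Fin (s i.1 - 1))
    {i : Fin n} (hi : i ∈ S) (hi' : i ∉ S') :
    ∑ l, intColFactor C S j i l * intColFactor C S' j' i l = 0 := by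
  simpa [intColFactor, hi, hi'] using (hC i).1 _

variable {t : ℕ} {D : Fin N → ∀ i, Fin (s i)}

theorem intCol_dotProduct_intCol (hD : hasStrength s D t) (hs : ∀ i, 0 < s i) (ht : t ≤ n)
    {S S' : Finset (Fin n)} (hSS' : (S ∪ S').card ≤ t)
    (j : ∀ i : S, Fin (s i.1 - 1)) (j' : ∀ i : S', Fin (s i.1 - 1)) :
    intCol C D S j ⬝ᵥ intCol C D S' j' = N / (∏ i ∈ S ∪ S', (s i : ℝ)) *
      ∏ i ∈ S ∪ S', ∑ l, intColFactor C S j i l * intColFactor C S' j' i l := by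
  rw [← hD.sum_prod_eq hs ht hSS']
  refine sum_congr rfl fun r _ => ?_
  rw [intCol_eq_prod_intColFactor D subset_union_left,
    intCol_eq_prod_intColFactor D subset_union_right, prod_mul_distrib]

theorem intCol_dotProduct_intCol_of_ne (hD : hasStrength s D t) (hs : ∀ i, 0 < s i)
    (ht : t ≤ n) (hC : ∀ i, isNOC (C i)) {S S' : Finset (Fin n)} (hne : S ≠ S')
    (hSS' : (S ∪ S').card ≤ t) (j : ∀ i : S, Fin (s i.1 - 1)) (j' : ∀ i : S', Fin (s i.1 - 1)) :
    intCol C D S j ⬝ᵥ intCol C D S' j' = 0 := by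
  rw [intCol_dotProduct_intCol hD hs ht hSS', mul_eq_zero]
  right
  by_cases h : S ⊆ S'
  · obtain ⟨i, hi', hi⟩ := exists_of_ssubset (h.ssubset_of_ne hne)
    refine prod_eq_zero (mem_union_right S hi') ?_
    simp_rw [mul_comm (intColFactor C S j i _)]
    exact sum_intColFactor_mul_intColFactor_of_mem_of_notMem hC j' j hi' hi
  · obtain ⟨i, hi, hi'⟩ := not_subset.mp h
    exact prod_eq_zero (mem_union_left S' hi)
      (sum_intColFactor_mul_intColFactor_of_mem_of_notMem hC j j' hi hi')

theorem intCol_dotProduct_intCol_self (hD : hasStrength s D t) (hs : ∀ i, 0 < s i)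
    (ht : t ≤ n) (hC : ∀ i, isNOC (C i)) {S : Finset (Fin n)} (hS : S.card ≤ t)
    (j j' : ∀ i : S, Fin (s i.1 - 1)) :
    intCol C D S j ⬝ᵥ intCol C D S j' = if j = j' then (N : ℝ) else 0 := by
  rw [intCol_dotProduct_intCol hD hs ht (by rwa [union_self]), union_self]
  have hfactor : ∀ i (hi : i ∈ S), ∑ l, intColFactor C S j i l * intColFactor C S j' i l =
      if j ⟨i, hi⟩ = j' ⟨i, hi⟩ then (s i : ℝ) else 0 := fun i hi => by
    simpa [intColFactor, hi] using (hC i).2 (j ⟨i, hi⟩) (j' ⟨i, hi⟩)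
  split_ifs with hjj'
  · subst hjj'
    rw [prod_congr rfl fun i hi => (hfactor i hi).trans (if_pos rfl)]
    exact div_mul_cancel₀ _ (prod_pos fun i _ => Nat.cast_pos.mpr (hs i)).ne'
  · obtain ⟨⟨i, hi⟩, hne⟩ := Function.ne_iff.mp hjj'
    exact mul_eq_zero_of_right _ (prod_eq_zero hi ((hfactor i hi).trans (if_neg hne)))

end Orthogonality

section Confounding

variable {N n t : ℕ} {s : Fin n → ℕ} {D : Fin N → ∀ i, Fin (s i)}
  {C : ∀ i, Fin (s i) → Fin (s i - 1) → ℝ}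

theorem mainCol_dotProduct_self (hD : hasStrength s D t) (hs : ∀ i, 0 < s i) (ht : t ≤ n)
    (hC : ∀ i, isNOC (C i)) (ht0 : 0 < t) (c : Fin n) (a : Fin (s c - 1)) :
    mainCol C D c a ⬝ᵥ mainCol C D c a = N := by
  rw [← intCol_singleton D c a, intCol_dotProduct_intCol_self hD hs ht hC (by rwa [card_singleton]),
    if_pos rfl]

theorem mainCol_mem_span_intCol_of_confounded (hD : hasStrength s D t) (hs : ∀ i, 0 < s i)
    (ht : t ≤ n) (hC : ∀ i, isNOC (C i)) {c : Fin n} {E : Finset (Fin n)} (hcE : c ∉ E)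
    (hE : E.card ≤ t) (hconf : confounded C D c E) (a : Fin (s c - 1)) :
    mainCol C D c a ∈ Submodule.span ℝ (Set.range (intCol C D E)) := by
  refine mem_span_of_mem_span_union_of_dotProduct_eq_zero
    (Submodule.span_mono (fullCols_subset D E) (hconf a)) ?_ ?_
  · rintro _ ⟨S, hSE, j, rfl⟩
    have hcS : c ∉ S := fun h => hcE (hSE.subset h)
    have hcard : ({c} ∪ S).card ≤ t := by
      have := card_lt_card hSE
      have := card_union_le {c} S
      rw [card_singleton] at this
      omega
    rw [← intCol_singleton D c a]
    exact intCol_dotProduct_intCol_of_ne hD hs ht hC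
      (fun h : {c} = S => hcS (h ▸ mem_singleton_self c)) hcard _ _
  · rintro _ ⟨J, rfl⟩ _ ⟨S, hSE, j, rfl⟩
    exact intCol_dotProduct_intCol_of_ne hD hs ht hC hSE.ne'
      (by rwa [union_eq_left.mpr hSE.subset]) J j

theorem sum_sq_mainCol_dotProduct_intCol_of_confounded (hD : hasStrength s D t)
    (hs : ∀ i, 0 < s i) (ht : t ≤ n) (hC : ∀ i, isNOC (C i)) (ht0 : 0 < t) {c : Fin n}
    {E : Finset (Fin n)} (hcE : c ∉ E) (hE : E.card ≤ t) (hconf : confounded C D c E)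
    (a : Fin (s c - 1)) :
    ∑ J, (mainCol C D c a ⬝ᵥ intCol C D E J) ^ 2 = (N : ℝ) ^ 2 := by
  rw [sum_sq_dotProduct_eq_of_orthogonal (intCol_dotProduct_intCol_self hD hs ht hC hE)
    (mainCol_mem_span_intCol_of_confounded hD hs ht hC hcE hE hconf a),
    mainCol_dotProduct_self hD hs ht hC ht0, sq]

theorem sum_sq_mainCol_dotProduct_intCol_le (hD : hasStrength s D t) (hs : ∀ i, 0 < s i)
    (ht : t ≤ n) (hC : ∀ i, isNOC (C i)) (ht0 : 0 < t) (hN : 0 < N) {E : Finset (Fin n)}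
    (hE : E.card ≤ t) (c : Fin n) (a : Fin (s c - 1)) :
    ∑ J, (mainCol C D c a ⬝ᵥ intCol C D E J) ^ 2 ≤ (N : ℝ) ^ 2 := by
  calc ∑ J, (mainCol C D c a ⬝ᵥ intCol C D E J) ^ 2
      ≤ N * (mainCol C D c a ⬝ᵥ mainCol C D c a) :=
        sum_sq_dotProduct_le_of_orthogonal (intCol_dotProduct_intCol_self hD hs ht hC hE)
          (Nat.cast_pos.mpr hN) _
    _ = (N : ℝ) ^ 2 := by rw [mainCol_dotProduct_self hD hs ht hC ht0, sq]

theorem projFreq_eq_of_confounded (hD : hasStrength s D t) (hs : ∀ i, 0 < s i) (ht : t ≤ n)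
    (hC : ∀ i, isNOC (C i)) (ht0 : 0 < t) (hN : 0 < N) {U : Finset (Fin n)} {c : Fin n}
    (hc : c ∈ U) (hU : (U.erase c).card ≤ t) (hconf : confounded C D c (U.erase c)) :
    projFreq C D U = (s c - 1 : ℕ) := by
  rw [projFreq, ← sum_sq_dotProduct_intCol_erase D hc,
    sum_congr rfl fun a _ => sum_sq_mainCol_dotProduct_intCol_of_confounded hD hs ht hC ht0
      (notMem_erase c U) hU hconf a]
  simp [(Nat.cast_pos.mpr hN).ne']

theorem projFreq_le (hD : hasStrength s D t) (hs : ∀ i, 0 < s i) (ht : t ≤ n)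
    (hC : ∀ i, isNOC (C i)) (ht0 : 0 < t) (hN : 0 < N) {U : Finset (Fin n)} {k : Fin n}
    (hk : k ∈ U) (hU : (U.erase k).card ≤ t) :
    projFreq C D U ≤ (s k - 1 : ℕ) := by
  rw [projFreq, ← sum_sq_dotProduct_intCol_erase D hk,
    div_le_iff₀ (by positivity)]
  calc _ ≤ ∑ _a : Fin (s k - 1), (N : ℝ) ^ 2 :=
        sum_le_sum fun a _ => sum_sq_mainCol_dotProduct_intCol_le hD hs ht hC ht0 hN hU k a
    _ = _ := by simp

end Confounding

theorem statement4_general {N n R : ℕ} (hN : 1 ≤ N) (hn : R ≤ n)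
    {s : Fin n → ℕ} (hs : ∀ i, 2 ≤ s i)
    (D : Fin N → ∀ i, Fin (s i)) (hD : hasStrength s D (R - 1))
    (C : ∀ i, Fin (s i) → Fin (s i - 1) → ℝ) (hC : ∀ i, isNOC (C i))
    (U : Finset (Fin n)) (hU : U.card = R) (c : Fin n) (hc : c ∈ U)
    (hgt : ∃ k ∈ U, s k < s c) :
    ¬ confounded C D c (U.erase c) := by
  intro hconf
  obtain ⟨k, hk, hlt⟩ := hgt
  have hs' : ∀ i, 0 < s i := fun i => two_pos.trans_le (hs i)
  have ht : R - 1 ≤ n := by omega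
  have hcard : ∀ i ∈ U, (U.erase i).card = R - 1 := fun i hi => by rw [card_erase_of_mem hi, hU]
  have ht0 : 0 < R - 1 :=
    hcard c hc ▸ card_pos.mpr ⟨k, mem_erase.mpr ⟨fun h => hlt.ne (congrArg s h), hk⟩⟩
  have hle : ((s c - 1 : ℕ) : ℝ) ≤ (s k - 1 : ℕ) :=
    (projFreq_eq_of_confounded hD hs' ht hC ht0 hN hc (hcard c hc).le hconf).symm.trans_le
      (projFreq_le hD hs' ht hC ht0 hN hk (hcard k hk).le)
  have hk2 := hs k
  have hle' : s c - 1 ≤ s k - 1 := by exact_mod_cast hle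
  omega

/-- a factor `c ∈ U` with more than the minimum number of levels in `U`
cannot be completely confounded by the other factors of `U`. -/
theorem statement4 {N n R : ℕ} (hN : 1 ≤ N) (hR : 2 ≤ R) (hn : R ≤ n)
    {s : Fin n → ℕ} (hs : ∀ i, 2 ≤ s i)
    (D : Fin N → ∀ i, Fin (s i)) (hD : hasStrength s D (R - 1))
    (C : ∀ i, Fin (s i) → Fin (s i - 1) → ℝ) (hC : ∀ i, isNOC (C i))
    (U : Finset (Fin n)) (hU : U.card = R) (c : Fin n) (hc : c ∈ U)
    (hgt : ∃ k ∈ U, s k < s c) :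
    ¬ confounded C D c (U.erase c) :=
  statement4_general hN hn hs D hD C hC U hU c hc hgt
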